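/- Let M = [[α,β],[γ,δ]] ∈ SL₊(Γ_n(ℝ)) and Ψ(M) = Λ̄ M Λ with Λ = (1/√2)[[1, i_n],[i_n, 1]]. Then Ψ(M) = [[A, C'],[C, A']] where A = (1/2)(α + δ' + (β - γ') i_n) and C = (1/2)(γ + β' + (δ - α') i_n), and these satisfy |A|² - |C|² = 1 and A C̄ ∈ V^{n+1}(ℝ). -/
import Mathlib


open CliffordAlgebra

/-- The negative-definite quadratic form on `ℝ^m`, so that `CliffordAlgebra (Qneg m)`
is the Clifford algebra on `m` anticommuting generators each squaring to `-1`. -/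
noncomputable def Qneg (m : ℕ) : QuadraticForm ℝ (Fin m → ℝ) :=
  -(QuadraticMap.weightedSumSquares ℝ (fun _ : Fin m => (1 : ℝ)))

/-- The `h`-th generator `i_h`. -/
noncomputable def gen (m : ℕ) (h : Fin m) : CliffordAlgebra (Qneg m) :=
  ι (Qneg m) (Pi.single h 1)

/-- The scalar (grade-0) coefficient of a Clifford algebra element. -/
noncomputable def scalarPart {m : ℕ} (x : CliffordAlgebra (Qneg m)) : ℝ :=
  letI : Invertible (2 : ℝ) := invertibleOfNonzero two_ne_zero
  ExteriorAlgebra.algebraMapInv ((CliffordAlgebra.equivExterior (Qneg m)) x)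

/-- Clifford conjugation `x ↦ x̄`, the composite of reversal and the grade involution. -/
noncomputable def cconj {m : ℕ} (x : CliffordAlgebra (Qneg m)) : CliffordAlgebra (Qneg m) :=
  CliffordAlgebra.reverse (CliffordAlgebra.involute x)

/-- The square norm `|x|² = ∑ x_I²` of a Clifford element (sum of squares of the
coordinates in the standard monomial basis), realized as the scalar part of `x̄ x`. -/
noncomputable def cnormSq {m : ℕ} (x : CliffordAlgebra (Qneg m)) : ℝ :=
  scalarPart (cconj x * x)

/-- Clifford vectors: elements of the form `a₀ + a₁ i₁ + ⋯ + a_m i_m` (the paper's `V`). -/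
def IsCliffordVector {m : ℕ} (x : CliffordAlgebra (Qneg m)) : Prop :=
  ∃ (a : ℝ) (v : Fin m → ℝ), x = algebraMap ℝ _ a + ι (Qneg m) v

/-- The Clifford group `Γ`: products of invertible Clifford vectors. -/
noncomputable def CliffordGroup (m : ℕ) : Submonoid (CliffordAlgebra (Qneg m)) :=
  Submonoid.closure {x | IsCliffordVector x ∧ IsUnit x}

/-- The Vahlen conditions on the entries of a matrix `[[α,β],[γ,δ]] ∈ SL₊(Γ_n(ℝ))`. -/
def IsVahlen {m : ℕ} (α β γ δ : CliffordAlgebra (Qneg m)) : Prop :=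
  (α ∈ CliffordGroup m ∨ α = 0) ∧ (β ∈ CliffordGroup m ∨ β = 0) ∧
  (γ ∈ CliffordGroup m ∨ γ = 0) ∧ (δ ∈ CliffordGroup m ∨ δ = 0) ∧
  α * reverse δ - β * reverse γ = 1 ∧
  IsCliffordVector (α * reverse β) ∧ IsCliffordVector (γ * reverse δ) ∧
  IsCliffordVector (reverse γ * α) ∧ IsCliffordVector (reverse δ * β)

/-- Vectors of `V^n(ℝ)` viewed inside `Cl_{n+1}(ℝ)`: last coordinate zero. -/
def IsSmallVector {m : ℕ} (x : CliffordAlgebra (Qneg (m + 1))) : Prop :=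
  ∃ (a : ℝ) (v : Fin (m + 1) → ℝ),
    v (Fin.last m) = 0 ∧ x = algebraMap ℝ _ a + ι (Qneg (m + 1)) v

/-- The Clifford group `Γ_n(ℝ)` viewed inside `Cl_{n+1}(ℝ)`. -/
noncomputable def SmallCliffordGroup (m : ℕ) : Submonoid (CliffordAlgebra (Qneg (m + 1))) :=
  Submonoid.closure {x | IsSmallVector x ∧ IsUnit x}

/-- The Vahlen conditions for `SL₊(Γ_n(ℝ))`, with entries viewed inside `Cl_{n+1}(ℝ)`. -/
def IsSmallVahlen {m : ℕ} (α β γ δ : CliffordAlgebra (Qneg (m + 1))) : Prop :=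
  (α ∈ SmallCliffordGroup m ∨ α = 0) ∧ (β ∈ SmallCliffordGroup m ∨ β = 0) ∧
  (γ ∈ SmallCliffordGroup m ∨ γ = 0) ∧ (δ ∈ SmallCliffordGroup m ∨ δ = 0) ∧
  α * reverse δ - β * reverse γ = 1 ∧
  IsSmallVector (α * reverse β) ∧ IsSmallVector (γ * reverse δ) ∧
  IsSmallVector (reverse γ * α) ∧ IsSmallVector (reverse δ * β)

section Aux

variable {k : ℕ}

lemma cconj_eq_star (x : CliffordAlgebra (Qneg k)) : cconj x = star x := rfl

lemma scalarPart_algebraMap (r : ℝ) :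
    scalarPart (algebraMap ℝ (CliffordAlgebra (Qneg k)) r) = r := by
  unfold scalarPart
  simp [changeForm_algebraMap]

lemma scalarPart_sub (x y : CliffordAlgebra (Qneg k)) :
    scalarPart (x - y) = scalarPart x - scalarPart y := by
  set_option synthInstance.maxHeartbeats 1000000 in
  simp only [scalarPart, map_sub]

lemma scalarPart_one : scalarPart (1 : CliffordAlgebra (Qneg k)) = 1 := by
  rw [show (1 : CliffordAlgebra (Qneg k)) = algebraMap ℝ _ 1 from (map_one _).symm,
    scalarPart_algebraMap]

lemma isCV_zero : IsCliffordVector (0 : CliffordAlgebra (Qneg k)) :=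
  ⟨0, 0, by simp⟩

lemma isCV_add {x y : CliffordAlgebra (Qneg k)} (hx : IsCliffordVector x)
    (hy : IsCliffordVector y) : IsCliffordVector (x + y) := by
  obtain ⟨a, v, rfl⟩ := hx
  obtain ⟨b, w, rfl⟩ := hy
  exact ⟨a + b, v + w, by rw [map_add, map_add]; abel⟩

lemma isCV_smul (r : ℝ) {x : CliffordAlgebra (Qneg k)} (hx : IsCliffordVector x) :
    IsCliffordVector (r • x) := by
  obtain ⟨a, v, rfl⟩ := hx
  exact ⟨r * a, r • v, by rw [map_smul, smul_add, Algebra.smul_def, ← map_mul]⟩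

lemma isCV_reverse {x : CliffordAlgebra (Qneg k)} (hx : IsCliffordVector x) :
    reverse x = x := by
  obtain ⟨a, v, rfl⟩ := hx
  rw [map_add, reverse_ι, reverse.commutes]

lemma isCV_star {x : CliffordAlgebra (Qneg k)} (hx : IsCliffordVector x) :
    IsCliffordVector (star x) := by
  obtain ⟨a, v, rfl⟩ := hx
  refine ⟨a, -v, ?_⟩
  rw [star_add, star_algebraMap, star_ι, map_neg]

lemma isCV_involute {x : CliffordAlgebra (Qneg k)} (hx : IsCliffordVector x) :
    IsCliffordVector (involute x) := by
  obtain ⟨a, v, rfl⟩ := hx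
  exact ⟨a, -v, by rw [map_add, involute_ι, involute.commutes, map_neg]⟩

lemma isSV_isCV {x : CliffordAlgebra (Qneg (k + 1))} (hx : IsSmallVector x) :
    IsCliffordVector x := by
  obtain ⟨a, v, -, rfl⟩ := hx
  exact ⟨a, v, rfl⟩

end Aux

section Aux2

variable {k : ℕ}

example : Nontrivial (CliffordAlgebra (Qneg k)) := inferInstance

lemma Qneg_apply (v : Fin k → ℝ) : Qneg k v = -∑ i, v i * v i := by
  simp [Qneg, QuadraticMap.weightedSumSquares_apply]

lemma polar_Qneg (u v : Fin k → ℝ) :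
    QuadraticMap.polar (Qneg k) u v = -(2 * ∑ i, u i * v i) := by
  unfold QuadraticMap.polar
  rw [Qneg_apply, Qneg_apply, Qneg_apply]
  have : ∀ i ∈ Finset.univ, ((u + v) i * (u + v) i)
      = (u i * u i + v i * v i) + 2 * (u i * v i) := fun i _ => by
    simp only [Pi.add_apply]; ring
  rw [Finset.sum_congr rfl this, Finset.sum_add_distrib, Finset.sum_add_distrib,
    ← Finset.mul_sum]
  ring

lemma Qneg_single (h : Fin k) : Qneg k (Pi.single h 1) = -1 := by
  rw [Qneg_apply]
  rw [Finset.sum_eq_single h (fun i _ hi => by simp [Pi.single_apply, hi]) (by simp)]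
  simp

lemma gen_mul_self (h : Fin k) : gen k h * gen k h = -1 := by
  rw [gen, ι_sq_scalar, Qneg_single, map_neg, map_one]

lemma polar_single_last {v : Fin (k + 1) → ℝ} (hv : v (Fin.last k) = 0) :
    QuadraticMap.polar (Qneg (k + 1)) (Pi.single (Fin.last k) 1) v = 0 := by
  rw [polar_Qneg]
  rw [Finset.sum_eq_single (Fin.last k) (fun i _ hi => by simp [Pi.single_apply, hi]) (by simp)]
  simp [hv]

lemma sw_gen {x : CliffordAlgebra (Qneg (k + 1))} (hx : IsSmallVector x) :
    gen (k + 1) (Fin.last k) * x = involute x * gen (k + 1) (Fin.last k) := by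
  obtain ⟨a, v, hv, rfl⟩ := hx
  have ho : (Qneg (k + 1)).IsOrtho (Pi.single (Fin.last k) 1) v := by
    have := polar_single_last (k := k) hv
    unfold QuadraticMap.polar at this
    unfold QuadraticMap.IsOrtho
    linarith
  rw [map_add, involute_ι, involute.commutes, mul_add, add_mul, gen,
    ι_mul_ι_comm_of_isOrtho ho, ← Algebra.commutes]
  ring_nf
  rw [neg_mul]

end Aux2

section Aux3

variable {k : ℕ}

local notation "e" => gen (k + 1) (Fin.last k)

lemma involute_gen (h : Fin k) : involute (gen k h) = -gen k h := by
  rw [gen, involute_ι]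

lemma reverse_gen (h : Fin k) : reverse (gen k h) = gen k h := by
  rw [gen, reverse_ι]

/-- `Sw x` means `e * x = involute x * e`. -/
def Sw {k : ℕ} (x : CliffordAlgebra (Qneg (k + 1))) : Prop :=
  gen (k + 1) (Fin.last k) * x = involute x * gen (k + 1) (Fin.last k)

lemma sw_one : Sw (1 : CliffordAlgebra (Qneg (k + 1))) := by
  simp [Sw]

lemma sw_zero : Sw (0 : CliffordAlgebra (Qneg (k + 1))) := by
  simp [Sw]

lemma sw_mul {x y : CliffordAlgebra (Qneg (k + 1))} (hx : Sw x) (hy : Sw y) : Sw (x * y) := by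
  unfold Sw at *
  rw [← mul_assoc, hx, mul_assoc, hy, map_mul, ← mul_assoc]

lemma sw_add {x y : CliffordAlgebra (Qneg (k + 1))} (hx : Sw x) (hy : Sw y) : Sw (x + y) := by
  unfold Sw at *
  rw [mul_add, hx, hy, map_add, add_mul]

lemma sw_sub {x y : CliffordAlgebra (Qneg (k + 1))} (hx : Sw x) (hy : Sw y) : Sw (x - y) := by
  unfold Sw at *
  rw [mul_sub, hx, hy, map_sub, sub_mul]

lemma sw_involute {x : CliffordAlgebra (Qneg (k + 1))} (hx : Sw x) : Sw (involute x) := by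
  unfold Sw at *
  have := congrArg involute hx
  rw [map_mul, map_mul, involute_gen, involute_involute] at this
  rw [involute_involute]
  rw [mul_neg, neg_mul] at this
  exact neg_injective this

lemma sw_reverse {x : CliffordAlgebra (Qneg (k + 1))} (hx : Sw x) : Sw (reverse x) := by
  have h2 : e * involute (reverse x) = reverse x * e := by
    have := congrArg (reverse (R := ℝ)) hx
    rw [reverse.map_mul, reverse.map_mul, reverse_gen, reverse_involute] at this
    exact this.symm
  have h3 : Sw (involute (reverse x)) := h2.trans (by rw [involute_involute])
  have := sw_involute h3
  rwa [involute_involute] at this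

lemma sw_star {x : CliffordAlgebra (Qneg (k + 1))} (hx : Sw x) : Sw (star x) :=
  sw_reverse (sw_involute hx)

lemma sw_group {x : CliffordAlgebra (Qneg (k + 1))} (hx : x ∈ SmallCliffordGroup k) : Sw x := by
  induction hx using Submonoid.closure_induction with
  | mem y hy => exact sw_gen hy.1
  | one => exact sw_one
  | mul x y hx hy ihx ihy => exact sw_mul ihx ihy

lemma sw_entry {x : CliffordAlgebra (Qneg (k + 1))}
    (hx : x ∈ SmallCliffordGroup k ∨ x = 0) : Sw x := by
  rcases hx with hx | rfl
  · exact sw_group hx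
  · exact sw_zero

lemma exp_mul {P Q X Y : CliffordAlgebra (Qneg (k + 1))} (hX : Sw X) (hY : Sw Y) :
    (P + Q * e) * (X + Y * e)
      = (P * X - Q * involute Y) + (P * Y + Q * involute X) * e := by
  unfold Sw at hX hY
  have h1 : Q * e * X = Q * involute X * e := by
    rw [mul_assoc, hX, ← mul_assoc]
  have h2 : Q * e * (Y * e) = -(Q * involute Y) := by
    rw [show Q * e * (Y * e) = Q * (e * Y) * e by noncomm_ring, hY,
      show Q * (involute Y * e) * e = Q * involute Y * (e * e) by noncomm_ring,
      gen_mul_self, mul_neg_one]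
  calc (P + Q * e) * (X + Y * e)
      = P * X + P * (Y * e) + (Q * e * X) + (Q * e * (Y * e)) := by noncomm_ring
    _ = P * X + P * (Y * e) + Q * involute X * e + -(Q * involute Y) := by rw [h1, h2]
    _ = (P * X - Q * involute Y) + (P * Y + Q * involute X) * e := by noncomm_ring

end Aux3

section Aux4

variable {k : ℕ}

lemma isCV_pvp {p v : CliffordAlgebra (Qneg k)} (hp : IsCliffordVector p)
    (hv : IsCliffordVector v) : IsCliffordVector (p * v * p) := by
  obtain ⟨s, t, rfl⟩ := hp
  obtain ⟨c, x, rfl⟩ := hv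
  have expand : (algebraMap ℝ (CliffordAlgebra (Qneg k)) s + ι (Qneg k) t)
        * (algebraMap ℝ (CliffordAlgebra (Qneg k)) c + ι (Qneg k) x)
        * (algebraMap ℝ (CliffordAlgebra (Qneg k)) s + ι (Qneg k) t)
      = algebraMap ℝ (CliffordAlgebra (Qneg k)) s * algebraMap ℝ (CliffordAlgebra (Qneg k)) c
          * algebraMap ℝ (CliffordAlgebra (Qneg k)) s
        + algebraMap ℝ (CliffordAlgebra (Qneg k)) s * algebraMap ℝ (CliffordAlgebra (Qneg k)) c
          * ι (Qneg k) t
        + algebraMap ℝ (CliffordAlgebra (Qneg k)) s * ι (Qneg k) x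
          * algebraMap ℝ (CliffordAlgebra (Qneg k)) s
        + ι (Qneg k) t * algebraMap ℝ (CliffordAlgebra (Qneg k)) c
          * algebraMap ℝ (CliffordAlgebra (Qneg k)) s
        + ι (Qneg k) t * algebraMap ℝ (CliffordAlgebra (Qneg k)) c * ι (Qneg k) t
        + (algebraMap ℝ (CliffordAlgebra (Qneg k)) s * ι (Qneg k) x * ι (Qneg k) t
           + ι (Qneg k) t * ι (Qneg k) x * algebraMap ℝ (CliffordAlgebra (Qneg k)) s)
        + ι (Qneg k) t * ι (Qneg k) x * ι (Qneg k) t := by noncomm_ring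
  refine ⟨s * c * s + c * Qneg k t + s * QuadraticMap.polar (Qneg k) t x,
    (2 * c * s + QuadraticMap.polar (Qneg k) t x) • t + (s * s - Qneg k t) • x, ?_⟩
  rw [expand]
  have e1 : algebraMap ℝ (CliffordAlgebra (Qneg k)) s * algebraMap ℝ (CliffordAlgebra (Qneg k)) c
      * algebraMap ℝ (CliffordAlgebra (Qneg k)) s
      = (s * c * s) • (1 : CliffordAlgebra (Qneg k)) := by
    rw [← map_mul, ← map_mul, Algebra.algebraMap_eq_smul_one]
  have e2 : algebraMap ℝ (CliffordAlgebra (Qneg k)) s * algebraMap ℝ (CliffordAlgebra (Qneg k)) c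
      * ι (Qneg k) t = (s * c) • ι (Qneg k) t := by
    rw [← map_mul, ← Algebra.smul_def]
  have e3 : algebraMap ℝ (CliffordAlgebra (Qneg k)) s * ι (Qneg k) x
      * algebraMap ℝ (CliffordAlgebra (Qneg k)) s = (s * s) • ι (Qneg k) x := by
    rw [← Algebra.commutes s (algebraMap ℝ (CliffordAlgebra (Qneg k)) s * ι (Qneg k) x),
      ← mul_assoc, ← map_mul, ← Algebra.smul_def]
  have e5 : ι (Qneg k) t * algebraMap ℝ (CliffordAlgebra (Qneg k)) c
      * algebraMap ℝ (CliffordAlgebra (Qneg k)) s = (c * s) • ι (Qneg k) t := by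
    rw [mul_assoc, ← map_mul, ← Algebra.commutes (c * s) (ι (Qneg k) t), ← Algebra.smul_def]
  have e6 : ι (Qneg k) t * algebraMap ℝ (CliffordAlgebra (Qneg k)) c * ι (Qneg k) t
      = (c * Qneg k t) • (1 : CliffordAlgebra (Qneg k)) := by
    rw [← Algebra.commutes c (ι (Qneg k) t), mul_assoc, ι_sq_scalar, ← map_mul,
      Algebra.algebraMap_eq_smul_one]
  have e47 : algebraMap ℝ (CliffordAlgebra (Qneg k)) s * ι (Qneg k) x * ι (Qneg k) t
      + ι (Qneg k) t * ι (Qneg k) x * algebraMap ℝ (CliffordAlgebra (Qneg k)) s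
      = (s * QuadraticMap.polar (Qneg k) t x) • (1 : CliffordAlgebra (Qneg k)) := by
    rw [← Algebra.commutes s (ι (Qneg k) t * ι (Qneg k) x), mul_assoc, ← mul_add,
      show ι (Qneg k) x * ι (Qneg k) t + ι (Qneg k) t * ι (Qneg k) x
        = algebraMap ℝ (CliffordAlgebra (Qneg k)) (QuadraticMap.polar (Qneg k) t x) from by
          rw [add_comm, ι_mul_ι_add_swap],
      ← map_mul, Algebra.algebraMap_eq_smul_one]
  have e8 : ι (Qneg k) t * ι (Qneg k) x * ι (Qneg k) t
      = QuadraticMap.polar (Qneg k) t x • ι (Qneg k) t - Qneg k t • ι (Qneg k) x := by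
    rw [ι_mul_ι_mul_ι, map_sub, map_smul, map_smul]
  rw [e1, e2, e3, e5, e6, e47, e8]
  simp only [map_add, map_sub, map_smul, Algebra.algebraMap_eq_smul_one]
  module

end Aux4

section Aux5

variable {k : ℕ}

lemma involute_star (x : CliffordAlgebra (Qneg k)) : involute (star x) = reverse x := by
  rw [star_def', involute_involute]

lemma star_involute_eq_reverse (x : CliffordAlgebra (Qneg k)) :
    star (involute x) = reverse x := by
  rw [star_def, involute_involute]

lemma reverse_star (x : CliffordAlgebra (Qneg k)) : reverse (star x) = involute x := by
  rw [star_def, reverse_reverse]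

lemma star_reverse (x : CliffordAlgebra (Qneg k)) : star (reverse x) = involute x := by
  rw [star_def', reverse_reverse]

lemma group_isUnit {x : CliffordAlgebra (Qneg (k + 1))} (hx : x ∈ SmallCliffordGroup k) :
    IsUnit x := by
  induction hx using Submonoid.closure_induction with
  | mem y hy => exact hy.2
  | one => exact isUnit_one
  | mul x y hx hy ihx ihy => exact ihx.mul ihy

lemma group_norm {x : CliffordAlgebra (Qneg (k + 1))} (hx : x ∈ SmallCliffordGroup k) :
    ∃ t : ℝ, x * star x = algebraMap ℝ _ t := by
  induction hx using Submonoid.closure_induction with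
  | mem y hy =>
    obtain ⟨a, v, -, rfl⟩ := hy.1
    refine ⟨a * a - Qneg (k + 1) v, ?_⟩
    rw [star_add, star_algebraMap, star_ι]
    have expand : (algebraMap ℝ (CliffordAlgebra (Qneg (k + 1))) a + ι (Qneg (k + 1)) v)
        * (algebraMap ℝ (CliffordAlgebra (Qneg (k + 1))) a + -ι (Qneg (k + 1)) v)
        = algebraMap ℝ (CliffordAlgebra (Qneg (k + 1))) a
            * algebraMap ℝ (CliffordAlgebra (Qneg (k + 1))) a
          - ι (Qneg (k + 1)) v * ι (Qneg (k + 1)) v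
          + (ι (Qneg (k + 1)) v * algebraMap ℝ (CliffordAlgebra (Qneg (k + 1))) a
             - algebraMap ℝ (CliffordAlgebra (Qneg (k + 1))) a * ι (Qneg (k + 1)) v) := by
      noncomm_ring
    rw [expand, ← Algebra.commutes a (ι (Qneg (k + 1)) v), sub_self, add_zero, ι_sq_scalar,
      ← map_mul, ← map_sub]
  | one => exact ⟨1, by simp⟩
  | mul x y hx hy ihx ihy =>
    obtain ⟨s, hs⟩ := ihx
    obtain ⟨t, ht⟩ := ihy
    refine ⟨t * s, ?_⟩
    rw [star_mul, show x * y * (star y * star x) = x * (y * star y) * star x from by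
      noncomm_ring, ht, ← Algebra.commutes t (x), mul_assoc, hs, ← map_mul]

lemma group_conj {x : CliffordAlgebra (Qneg (k + 1))} (hx : x ∈ SmallCliffordGroup k) :
    ∀ v : CliffordAlgebra (Qneg (k + 1)), IsCliffordVector v →
      IsCliffordVector (involute x * v * star x) := by
  induction hx using Submonoid.closure_induction with
  | mem y hy =>
    intro v hv
    obtain ⟨a, w, -, rfl⟩ := hy.1
    have h1 : involute (algebraMap ℝ (CliffordAlgebra (Qneg (k + 1))) a + ι (Qneg (k + 1)) w)
        = algebraMap ℝ (CliffordAlgebra (Qneg (k + 1))) a + ι (Qneg (k + 1)) (-w) := by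
      rw [map_add, involute_ι, involute.commutes, map_neg]
    have h2 : star (algebraMap ℝ (CliffordAlgebra (Qneg (k + 1))) a + ι (Qneg (k + 1)) w)
        = algebraMap ℝ (CliffordAlgebra (Qneg (k + 1))) a + ι (Qneg (k + 1)) (-w) := by
      rw [star_add, star_algebraMap, star_ι, map_neg]
    rw [h1, h2]
    exact isCV_pvp ⟨a, -w, rfl⟩ hv
  | one => intro v hv; simpa using hv
  | mul x y hx hy ihx ihy =>
    intro v hv
    have hr : involute (x * y) * v * star (x * y)
        = involute x * (involute y * v * star y) * star x := by
      rw [map_mul, star_mul]; noncomm_ring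
    rw [hr]
    exact ihx _ (ihy _ hv)

lemma entry_norm {x : CliffordAlgebra (Qneg (k + 1))}
    (hx : x ∈ SmallCliffordGroup k ∨ x = 0) :
    ∃ t : ℝ, x * star x = algebraMap ℝ _ t := by
  rcases hx with hx | rfl
  · exact group_norm hx
  · exact ⟨0, by simp⟩

lemma key_vec {x y : CliffordAlgebra (Qneg (k + 1))}
    (hx : x ∈ SmallCliffordGroup k ∨ x = 0) (hy : y ∈ SmallCliffordGroup k ∨ y = 0)
    (hw : IsCliffordVector (reverse y * x)) : IsCliffordVector (x * star y) := by
  rcases hx with hx | rfl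
  · rcases hy with hy | rfl
    · obtain ⟨N, hN⟩ := group_norm hy
      have uy := group_isUnit hy
      have hNne : N ≠ 0 := by
        intro h0
        rw [h0, map_zero] at hN
        have hsy : star y = 0 := uy.mul_left_cancel (by rw [hN, mul_zero])
        have : y = 0 := by rw [← star_star y, hsy, star_zero]
        rw [this] at uy
        exact not_isUnit_zero uy
      have h3 := group_conj hy _ hw
      have comp : involute y * (reverse y * x) * star y
          = N • (x * star y) := by
        rw [show involute y * (reverse y * x) * star y
            = (involute y * reverse y) * (x * star y) from by noncomm_ring,
          show involute y * reverse y = involute (y * star y) from by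
            rw [map_mul, involute_star],
          hN, involute.commutes, Algebra.smul_def]
      rw [comp] at h3
      have := isCV_smul N⁻¹ h3
      rwa [smul_smul, inv_mul_cancel₀ hNne, one_smul] at this
    · rw [star_zero, mul_zero]; exact isCV_zero
  · rw [zero_mul]; exact isCV_zero

lemma vahlen_flip {a b c d : CliffordAlgebra (Qneg (k + 1))}
    (ha : a ∈ SmallCliffordGroup k ∨ a = 0) (hb : b ∈ SmallCliffordGroup k ∨ b = 0)
    (h1 : a * reverse d - b * reverse c = 1)
    (hab : IsCliffordVector (a * reverse b)) (hca : IsCliffordVector (reverse c * a)) :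
    reverse d * a - reverse b * c = 1 := by
  rcases ha with ha | rfl
  · have ua := group_isUnit ha
    obtain ⟨u, hu⟩ := ua
    set a' : CliffordAlgebra (Qneg (k + 1)) := ↑u⁻¹ with ha'
    have ha1 : a * a' = 1 := by rw [← hu, ha']; exact u.mul_inv
    have ha2 : a' * a = 1 := by rw [← hu, ha']; exact u.inv_mul
    set v := a * reverse b with hv
    have hv_rev : reverse v = v := isCV_reverse hab
    have hvb : v = b * reverse a := by
      rw [← hv_rev, hv, reverse.map_mul, reverse_reverse]
    have hbb : b = v * reverse a' := by
      rw [hvb, mul_assoc, ← reverse.map_mul, ha2, reverse.map_one, mul_one]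
    set w := reverse c * a with hw
    have hw_rev : reverse w = w := isCV_reverse hca
    have hc_eq : reverse c = w * a' := by
      rw [hw, mul_assoc, ha1, mul_one]
    have hcc : c = reverse a' * w := by
      rw [← reverse_reverse c, hc_eq, reverse.map_mul, hw_rev]
    have e1 : reverse b * c = a' * (v * (reverse a' * w)) := by
      rw [hbb, hcc, reverse.map_mul, reverse_reverse, hv_rev]
      noncomm_ring
    have hd : reverse d = a' * (1 + b * reverse c) := by
      rw [← sub_eq_iff_eq_add.mp h1, ← mul_assoc, ha2, one_mul]
    have e2 : reverse d * a = 1 + a' * (v * (reverse a' * w)) := by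
      rw [hd]
      rw [show a' * (1 + b * reverse c) * a = a' * a + a' * (b * (reverse c * a)) from by
        noncomm_ring, ha2, hbb, hc_eq]
      rw [show w * a' * a = w * (a' * a) from mul_assoc _ _ _, ha2, mul_one]
      rw [show v * reverse a' * w = v * (reverse a' * w) from mul_assoc _ _ _]
    rw [e2, e1]
    abel
  · have hbc : b * reverse c = -1 := by
      rw [zero_mul, zero_sub] at h1
      rw [← neg_neg (b * reverse c), h1]
    rcases hb with hb | rfl
    · have ub := group_isUnit hb
      obtain ⟨u, hu⟩ := ub
      set b' : CliffordAlgebra (Qneg (k + 1)) := ↑u⁻¹ with hb'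
      have hb1 : b * b' = 1 := by rw [← hu, hb']; exact u.mul_inv
      have hb2 : b' * b = 1 := by rw [← hu, hb']; exact u.inv_mul
      have hrc : reverse c = -b' := by
        have := congrArg (fun z => b' * z) hbc
        simpa [← mul_assoc, hb2] using this
      have hcc : c = -reverse b' := by
        rw [← reverse_reverse c, hrc, map_neg]
      have hfin : reverse b * c = -1 := by
        rw [hcc, mul_neg, ← reverse.map_mul, hb2, reverse.map_one]
      rw [mul_zero, zero_sub, hfin, neg_neg]
    · exfalso
      rw [zero_mul] at hbc
      exact absurd hbc (by simp)

end Aux5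

section Aux6

variable {k : ℕ}

lemma scalarPart_smul (r : ℝ) (x : CliffordAlgebra (Qneg k)) :
    scalarPart (r • x) = r * scalarPart x := by
  set_option synthInstance.maxHeartbeats 1000000 in
  simp only [scalarPart, map_smul, smul_eq_mul]

lemma sw_neg {x : CliffordAlgebra (Qneg (k + 1))} (hx : Sw x) : Sw (-x) := by
  unfold Sw at *
  rw [mul_neg, hx, map_neg, neg_mul]

lemma involute_reverse_eq_star (x : CliffordAlgebra (Qneg k)) :
    involute (reverse x) = star x := (star_def' x).symm

lemma star_gen (h : Fin k) : star (gen k h) = -gen k h := by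
  rw [gen, star_ι]

lemma star_pe {P Q : CliffordAlgebra (Qneg (k + 1))} (hQ : Sw Q) :
    star (P + Q * gen (k + 1) (Fin.last k))
      = star P + (-(involute (star Q))) * gen (k + 1) (Fin.last k) := by
  rw [star_add, star_mul, star_gen, neg_mul, sw_star hQ, neg_mul, ← neg_mul]

lemma starAA {P Q : CliffordAlgebra (Qneg (k + 1))} (hP : Sw P) (hQ : Sw Q) :
    star (P + Q * gen (k + 1) (Fin.last k)) * (P + Q * gen (k + 1) (Fin.last k))
      = (star P * P + involute (star Q) * involute Q)
        + (star P * Q - involute (star Q) * involute P) * gen (k + 1) (Fin.last k) := by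
  rw [star_pe hQ, exp_mul hP hQ]
  noncomm_ring

lemma mul_star_pe {P Q R S : CliffordAlgebra (Qneg (k + 1))}
    (hR : Sw R) (hS : Sw S) :
    (P + Q * gen (k + 1) (Fin.last k)) * star (R + S * gen (k + 1) (Fin.last k))
      = (P * star R + Q * star S)
        + (Q * involute (star R) - P * involute (star S)) * gen (k + 1) (Fin.last k) := by
  rw [star_pe hS, exp_mul (sw_star hR) (sw_neg (sw_involute (sw_star hS))), map_neg,
    involute_involute]
  noncomm_ring

lemma comp2 {a b c d : CliffordAlgebra (Qneg (k + 1))}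
    (h3 : reverse d * a - reverse b * c = 1)
    (h4i : star a * involute d - star c * involute b = 1)
    (v1 : reverse b * d = reverse d * b)
    (v2i : star a * involute c = star c * involute a) :
    ((star a + reverse d) * (a + involute d) + (reverse b - star c) * (involute b - c))
      + ((star a + reverse d) * (b - involute c) - (reverse b - star c) * (involute a + d))
        * gen (k + 1) (Fin.last k)
      - (((star c + reverse b) * (c + involute b) + (reverse d - star a) * (involute d - a))
        + ((star c + reverse b) * (d - involute a) - (reverse d - star a) * (involute c + b))
          * gen (k + 1) (Fin.last k))
      = 4 := by
  have mid : 2 * (reverse d * a - reverse b * c) + 2 * (star a * involute d - star c * involute b)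
      + (2 * (reverse d * b - reverse b * d) + 2 * (star c * involute a - star a * involute c))
        * gen (k + 1) (Fin.last k) = (4 : CliffordAlgebra (Qneg (k + 1))) := by
    rw [h3, h4i, v1, v2i]
    noncomm_ring
    simp
  refine Eq.trans ?_ mid
  noncomm_ring

lemma comp3e {a b c d : CliffordAlgebra (Qneg (k + 1))} {Na Nb Nc Nd : ℝ}
    (h1 : a * reverse d - b * reverse c = 1)
    (h2i : involute d * star a - involute c * star b = 1)
    (hNa : a * star a = algebraMap ℝ _ Na) (hNb : b * star b = algebraMap ℝ _ Nb)
    (hNc : involute c * reverse c = algebraMap ℝ _ Nc)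
    (hNd : involute d * reverse d = algebraMap ℝ _ Nd) :
    (b - involute c) * (reverse c + star b) - (a + involute d) * (reverse d - star a)
      = algebraMap ℝ _ (Na + Nb - Nc - Nd) := by
  have mid : -(a * reverse d - b * reverse c) + (a * star a + b * star b)
      - (involute c * reverse c + involute d * reverse d)
      + (involute d * star a - involute c * star b)
      = algebraMap ℝ (CliffordAlgebra (Qneg (k + 1))) (Na + Nb - Nc - Nd) := by
    rw [h1, h2i, hNa, hNb, hNc, hNd, map_sub, map_sub, map_add]
    noncomm_ring
  refine Eq.trans ?_ mid
  noncomm_ring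

lemma comp3v {a b c d : CliffordAlgebra (Qneg (k + 1))}
    (hp1 : involute c * reverse a = a * star c)
    (hp2 : involute d * reverse b = b * star d)
    (v3 : b * reverse a = a * reverse b)
    (v4 : involute c * star d = involute d * star c) :
    (a + involute d) * (star c + reverse b) + (b - involute c) * (star d - reverse a)
      = (a * star c + a * star c) + (b * star d + b * star d) := by
  have mid : (a * star c + involute c * reverse a) + (b * star d + involute d * reverse b)
      + (a * reverse b - b * reverse a) + (involute d * star c - involute c * star d)
      = (a * star c + a * star c) + (b * star d + b * star d) := by
    rw [hp1, hp2, v3, v4]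
    noncomm_ring
  refine Eq.trans ?_ mid
  noncomm_ring

lemma smul_mul_smul' (r s : ℝ) (x y : CliffordAlgebra (Qneg k)) :
    (r • x) * (s • y) = (r * s) • (x * y) := by
  rw [Algebra.smul_mul_assoc, Algebra.mul_smul_comm, smul_smul]

lemma smul_fin_two (r : ℝ) (a b c d : CliffordAlgebra (Qneg k)) :
    r • Matrix.of ![![a, b], ![c, d]] = Matrix.of ![![r • a, r • b], ![r • c, r • d]] := by
  ext i j
  fin_cases i <;> fin_cases j <;> simp

end Aux6

set_option maxHeartbeats 2000000 in
open Matrix in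
/-- for `M = [[α,β],[γ,δ]] ∈ SL₊(Γ_n(ℝ))` and the Cayley transform
`Ψ(M) = Λ̄ M Λ` with `Λ = (1/√2)[[1,i_n],[i_n,1]]`, one has `Ψ(M) = [[A,C'],[C,A']]` with
`A = (α+δ'+(β-γ')i_n)/2`, `C = (γ+β'+(δ-α')i_n)/2`, and `|A|² - |C|² = 1` and
`A C̄` is a vector of `V^{n+1}(ℝ)`. -/
theorem stmt15 {m : ℕ} (α β γ δ : CliffordAlgebra (Qneg (m + 1)))
    (h : IsSmallVahlen α β γ δ) :
    let e := gen (m + 1) (Fin.last m)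
    let A : CliffordAlgebra (Qneg (m + 1)) :=
      (2 : ℝ)⁻¹ • (α + involute δ + (β - involute γ) * e)
    let C : CliffordAlgebra (Qneg (m + 1)) :=
      (2 : ℝ)⁻¹ • (γ + involute β + (δ - involute α) * e)
    ((Real.sqrt 2)⁻¹ • !![1, -e; -e, 1]) * !![α, β; γ, δ] *
        ((Real.sqrt 2)⁻¹ • !![1, e; e, 1]) = !![A, involute C; C, involute A] ∧
    cnormSq A - cnormSq C = 1 ∧ IsCliffordVector (A * cconj C) := by
  intro e A C
  obtain ⟨hα, hβ, hγ, hδ, hI1, hαβ, hγδ, hγα, hδβ⟩ := h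
  have he : e = gen (m + 1) (Fin.last m) := rfl
  have hA : A = (2 : ℝ)⁻¹ • (α + involute δ + (β - involute γ) * gen (m + 1) (Fin.last m)) := rfl
  have hC : C = (2 : ℝ)⁻¹ • (γ + involute β + (δ - involute α) * gen (m + 1) (Fin.last m)) := rfl
  have he2 : gen (m + 1) (Fin.last m) * gen (m + 1) (Fin.last m) = -1 := gen_mul_self _
  have swa : Sw α := sw_entry hα
  have swb : Sw β := sw_entry hβ
  have swc : Sw γ := sw_entry hγ
  have swd : Sw δ := sw_entry hδ
  have ea : gen (m + 1) (Fin.last m) * α = involute α * gen (m + 1) (Fin.last m) := swa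
  have eb : gen (m + 1) (Fin.last m) * β = involute β * gen (m + 1) (Fin.last m) := swb
  have ec : gen (m + 1) (Fin.last m) * γ = involute γ * gen (m + 1) (Fin.last m) := swc
  have ed : gen (m + 1) (Fin.last m) * δ = involute δ * gen (m + 1) (Fin.last m) := swd
  have ta : gen (m + 1) (Fin.last m) * α * gen (m + 1) (Fin.last m) = -involute α := by
    rw [ea, mul_assoc, he2, mul_neg_one]
  have tb : gen (m + 1) (Fin.last m) * β * gen (m + 1) (Fin.last m) = -involute β := by
    rw [eb, mul_assoc, he2, mul_neg_one]
  have tc : gen (m + 1) (Fin.last m) * γ * gen (m + 1) (Fin.last m) = -involute γ := by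
    rw [ec, mul_assoc, he2, mul_neg_one]
  have td : gen (m + 1) (Fin.last m) * δ * gen (m + 1) (Fin.last m) = -involute δ := by
    rw [ed, mul_assoc, he2, mul_neg_one]
  have swP : Sw (α + involute δ) := sw_add swa (sw_involute swd)
  have swQ : Sw (β - involute γ) := sw_sub swb (sw_involute swc)
  have swR : Sw (γ + involute β) := sw_add swc (sw_involute swb)
  have swS : Sw (δ - involute α) := sw_sub swd (sw_involute swa)
  have hI2 : δ * reverse α - γ * reverse β = 1 := by
    have h2 : reverse (R := ℝ) (α * reverse δ - β * reverse γ)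
        = reverse (1 : CliffordAlgebra (Qneg (m + 1))) := by rw [hI1]
    rwa [_root_.map_sub, reverse.map_mul, reverse.map_mul, reverse_reverse, reverse_reverse,
      reverse.map_one] at h2
  have hI3 : reverse δ * α - reverse β * γ = 1 :=
    vahlen_flip hα hβ hI1 (isSV_isCV hαβ) (isSV_isCV hγα)
  have hI4 : reverse α * δ - reverse γ * β = 1 := by
    have h2 : reverse (R := ℝ) (reverse δ * α - reverse β * γ)
        = reverse (1 : CliffordAlgebra (Qneg (m + 1))) := by rw [hI3]
    rwa [_root_.map_sub, reverse.map_mul, reverse.map_mul, reverse_reverse, reverse_reverse,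
      reverse.map_one] at h2
  have hI4i : star α * involute δ - star γ * involute β = 1 := by
    have h2 : involute (reverse α * δ - reverse γ * β)
        = involute (1 : CliffordAlgebra (Qneg (m + 1))) := by rw [hI4]
    rwa [_root_.map_sub, _root_.map_mul, _root_.map_mul, involute_reverse_eq_star,
      involute_reverse_eq_star, _root_.map_one] at h2
  have hI2i : involute δ * star α - involute γ * star β = 1 := by
    have h2 : involute (δ * reverse α - γ * reverse β)
        = involute (1 : CliffordAlgebra (Qneg (m + 1))) := by rw [hI2]
    rwa [_root_.map_sub, _root_.map_mul, _root_.map_mul, involute_reverse_eq_star,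
      involute_reverse_eq_star, _root_.map_one] at h2
  have hV1 : reverse β * δ = reverse δ * β := by
    have h2 := isCV_reverse (isSV_isCV hδβ)
    rwa [reverse.map_mul, reverse_reverse] at h2
  have hV2 : reverse α * γ = reverse γ * α := by
    have h2 := isCV_reverse (isSV_isCV hγα)
    rwa [reverse.map_mul, reverse_reverse] at h2
  have hV2i : star α * involute γ = star γ * involute α := by
    have h2 : involute (reverse α * γ) = involute (reverse γ * α) := by rw [hV2]
    rwa [_root_.map_mul, _root_.map_mul, involute_reverse_eq_star,
      involute_reverse_eq_star] at h2
  have hV3 : β * reverse α = α * reverse β := by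
    have h2 := isCV_reverse (isSV_isCV hαβ)
    rwa [reverse.map_mul, reverse_reverse] at h2
  have hV4 : involute γ * star δ = involute δ * star γ := by
    have h2 := isCV_reverse (isCV_star (isSV_isCV hγδ))
    rw [StarMul.star_mul, star_reverse] at h2
    rwa [reverse.map_mul, reverse_star, ← star_def] at h2
  obtain ⟨Na, hNa⟩ := entry_norm hα
  obtain ⟨Nb, hNb⟩ := entry_norm hβ
  obtain ⟨Nc, hNc⟩ := entry_norm hγ
  obtain ⟨Nd, hNd⟩ := entry_norm hδ
  have hNc' : involute γ * reverse γ = algebraMap ℝ _ Nc := by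
    have h2 : involute (γ * star γ) = involute (algebraMap ℝ _ Nc) := by rw [hNc]
    rwa [_root_.map_mul, involute_star, involute.commutes] at h2
  have hNd' : involute δ * reverse δ = algebraMap ℝ _ Nd := by
    have h2 : involute (δ * star δ) = involute (algebraMap ℝ _ Nd) := by rw [hNd]
    rwa [_root_.map_mul, involute_star, involute.commutes] at h2
  have hvec1 : IsCliffordVector (α * star γ) := key_vec hα hγ (isSV_isCV hγα)
  have hvec2 : IsCliffordVector (β * star δ) := key_vec hβ hδ (isSV_isCV hδβ)
  have hp1 : involute γ * reverse α = α * star γ := by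
    have h2 := isCV_reverse hvec1
    rwa [reverse.map_mul, reverse_star] at h2
  have hp2 : involute δ * reverse β = β * star δ := by
    have h2 := isCV_reverse hvec2
    rwa [reverse.map_mul, reverse_star] at h2
  have s1 : star (α + involute δ) = star α + reverse δ := by
    rw [star_add, star_involute_eq_reverse]
  have s2 : star (β - involute γ) = star β - reverse γ := by
    rw [star_sub, star_involute_eq_reverse]
  have s2i : involute (star (β - involute γ)) = reverse β - star γ := by
    rw [s2, _root_.map_sub, involute_star, involute_reverse_eq_star]
  have q2i : involute (β - involute γ) = involute β - γ := by
    rw [_root_.map_sub, involute_involute]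
  have p2i : involute (α + involute δ) = involute α + δ := by
    rw [_root_.map_add, involute_involute]
  have s3 : star (γ + involute β) = star γ + reverse β := by
    rw [star_add, star_involute_eq_reverse]
  have s4 : star (δ - involute α) = star δ - reverse α := by
    rw [star_sub, star_involute_eq_reverse]
  have s4i : involute (star (δ - involute α)) = reverse δ - star α := by
    rw [s4, _root_.map_sub, involute_star, involute_reverse_eq_star]
  have r2i : involute (δ - involute α) = involute δ - α := by
    rw [_root_.map_sub, involute_involute]
  have r3i : involute (γ + involute β) = involute γ + β := by
    rw [_root_.map_add, involute_involute]
  have s3i : involute (star (γ + involute β)) = reverse γ + star β := by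
    rw [s3, _root_.map_add, involute_star, involute_reverse_eq_star]
  have hhalf : (Real.sqrt 2)⁻¹ * (Real.sqrt 2)⁻¹ = (2 : ℝ)⁻¹ := by
    rw [← mul_inv, Real.mul_self_sqrt (by norm_num : (0 : ℝ) ≤ 2)]
  refine ⟨?_, ?_, ?_⟩
  · -- Part 1 : the matrix identity
    have hiC : involute ((2 : ℝ)⁻¹ • (γ + involute β + (δ - involute α) * gen (m + 1) (Fin.last m)))
        = (2 : ℝ)⁻¹ • (involute γ + β + (α - involute δ) * gen (m + 1) (Fin.last m)) := by
      rw [_root_.map_smul]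
      congr 1
      rw [_root_.map_add, _root_.map_mul, r3i, r2i, gen, involute_ι]
      noncomm_ring
    have hiA : involute ((2 : ℝ)⁻¹ • (α + involute δ + (β - involute γ) * gen (m + 1) (Fin.last m)))
        = (2 : ℝ)⁻¹ • (involute α + δ + (γ - involute β) * gen (m + 1) (Fin.last m)) := by
      rw [_root_.map_smul]
      congr 1
      rw [_root_.map_add, _root_.map_mul, p2i, q2i, gen, involute_ι]
      noncomm_ring
    rw [hA, hC, he, hiC, hiA]
    rw [Matrix.smul_mul, Matrix.smul_mul, Matrix.mul_smul, smul_smul, hhalf,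
      Matrix.mul_fin_two, Matrix.mul_fin_two]
    have E00 : (1 * α + -gen (m + 1) (Fin.last m) * γ) * 1
          + (1 * β + -gen (m + 1) (Fin.last m) * δ) * gen (m + 1) (Fin.last m)
        = α + involute δ + (β - involute γ) * gen (m + 1) (Fin.last m) := by
      rw [show (1 * α + -gen (m + 1) (Fin.last m) * γ) * 1
            + (1 * β + -gen (m + 1) (Fin.last m) * δ) * gen (m + 1) (Fin.last m)
          = α + β * gen (m + 1) (Fin.last m) - gen (m + 1) (Fin.last m) * γ
            - gen (m + 1) (Fin.last m) * δ * gen (m + 1) (Fin.last m) from by noncomm_ring,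
        ec, td]
      noncomm_ring
    have E01 : (1 * α + -gen (m + 1) (Fin.last m) * γ) * gen (m + 1) (Fin.last m)
          + (1 * β + -gen (m + 1) (Fin.last m) * δ) * 1
        = involute γ + β + (α - involute δ) * gen (m + 1) (Fin.last m) := by
      rw [show (1 * α + -gen (m + 1) (Fin.last m) * γ) * gen (m + 1) (Fin.last m)
            + (1 * β + -gen (m + 1) (Fin.last m) * δ) * 1
          = α * gen (m + 1) (Fin.last m) + β
            - gen (m + 1) (Fin.last m) * γ * gen (m + 1) (Fin.last m)
            - gen (m + 1) (Fin.last m) * δ from by noncomm_ring,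
        tc, ed]
      noncomm_ring
    have E10 : (-gen (m + 1) (Fin.last m) * α + 1 * γ) * 1
          + (-gen (m + 1) (Fin.last m) * β + 1 * δ) * gen (m + 1) (Fin.last m)
        = γ + involute β + (δ - involute α) * gen (m + 1) (Fin.last m) := by
      rw [show (-gen (m + 1) (Fin.last m) * α + 1 * γ) * 1
            + (-gen (m + 1) (Fin.last m) * β + 1 * δ) * gen (m + 1) (Fin.last m)
          = γ + δ * gen (m + 1) (Fin.last m) - gen (m + 1) (Fin.last m) * α
            - gen (m + 1) (Fin.last m) * β * gen (m + 1) (Fin.last m) from by noncomm_ring,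
        ea, tb]
      noncomm_ring
    have E11 : (-gen (m + 1) (Fin.last m) * α + 1 * γ) * gen (m + 1) (Fin.last m)
          + (-gen (m + 1) (Fin.last m) * β + 1 * δ) * 1
        = involute α + δ + (γ - involute β) * gen (m + 1) (Fin.last m) := by
      rw [show (-gen (m + 1) (Fin.last m) * α + 1 * γ) * gen (m + 1) (Fin.last m)
            + (-gen (m + 1) (Fin.last m) * β + 1 * δ) * 1
          = γ * gen (m + 1) (Fin.last m) + δ
            - gen (m + 1) (Fin.last m) * α * gen (m + 1) (Fin.last m)
            - gen (m + 1) (Fin.last m) * β from by noncomm_ring,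
        ta, eb]
      noncomm_ring
    rw [E00, E01, E10, E11]
    exact smul_fin_two _ _ _ _ _
  · -- Part 2 : the norm identity
    rw [hA, hC]
    unfold cnormSq
    simp only [cconj_eq_star]
    rw [CliffordAlgebra.star_smul, CliffordAlgebra.star_smul, smul_mul_smul', smul_mul_smul']
    rw [scalarPart_smul, scalarPart_smul, ← mul_sub, ← scalarPart_sub]
    have hkey : star (α + involute δ + (β - involute γ) * gen (m + 1) (Fin.last m))
          * (α + involute δ + (β - involute γ) * gen (m + 1) (Fin.last m))
        - star (γ + involute β + (δ - involute α) * gen (m + 1) (Fin.last m))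
          * (γ + involute β + (δ - involute α) * gen (m + 1) (Fin.last m))
        = (4 : CliffordAlgebra (Qneg (m + 1))) := by
      rw [starAA swP swQ, starAA swR swS, s1, s2i, q2i, p2i, s3, s4i, r2i, r3i]
      exact comp2 hI3 hI4i hV1 hV2i
    rw [hkey, show (4 : CliffordAlgebra (Qneg (m + 1))) = algebraMap ℝ _ (4 : ℝ) from
      (map_ofNat _ 4).symm, scalarPart_algebraMap]
    norm_num
  · -- Part 3 : A * C̄ is a Clifford vector
    rw [hA, hC, cconj_eq_star, CliffordAlgebra.star_smul, smul_mul_smul']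
    rw [mul_star_pe swR swS, s3i, s4i, s3, s4]
    rw [comp3v hp1 hp2 hV3 hV4, comp3e hI1 hI2i hNa hNb hNc' hNd']
    refine isCV_smul _ (isCV_add (isCV_add (isCV_add hvec1 hvec1) (isCV_add hvec2 hvec2)) ?_)
    exact ⟨0, (Na + Nb - Nc - Nd) • (Pi.single (Fin.last m) 1 : Fin (m + 1) → ℝ), by
      rw [_root_.map_zero, zero_add, _root_.map_smul, ← Algebra.smul_def]; rfl⟩
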